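/- arXiv:2410.11707 — 4 statements merged into one kernel-verified Lean document; each statement's English description precedes it below -/
import Mathlib

section
/- Let A, B, C be unital C*-algebras, and let Φ : A → B and Ψ : B → C be unital completely positive maps. Assume that Ψ is faithful and that the composition Ψ ∘ Φ : A → C is a unital *-homomorphism. Then Φ is a unital *-homomorphism and Φ(A) is contained in the multiplicative domain of Ψ, i.e., for every a ∈ A and every x ∈ B one has Ψ(Φ(a)x) = Ψ(Φ(a))Ψ(x) and Ψ(xΦ(a)) = Ψ(x)Ψ(Φ(a)). -/
/-- An element of a matrix algebra over a C*-algebra is positive iff it factors as `Nᴴ * N`. -/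
def Matrix.IsPosMat {A : Type*} [Ring A] [StarRing A] {n : ℕ}
    (M : Matrix (Fin n) (Fin n) A) : Prop :=
  ∃ N : Matrix (Fin n) (Fin n) A, M = N.conjTranspose * N

/-- A linear map between C*-algebras is unital completely positive (ucp) if it is unital and,
for every `n`, the induced map on `n × n` matrices (applying the map entrywise) maps positive
elements to positive elements. -/
structure IsUCP {A B : Type*} [Ring A] [StarRing A] [Algebra ℂ A] [Ring B] [StarRing B]
    [Algebra ℂ B] (Φ : A →ₗ[ℂ] B) : Prop where
  unital : Φ 1 = 1
  cp : ∀ (n : ℕ) (M : Matrix (Fin n) (Fin n) A), M.IsPosMat → (M.map Φ).IsPosMat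

section Helpers

variable {A B : Type*} [CStarAlgebra A] [CStarAlgebra B]

/-- The Gram matrix of a tuple is positive in the factorization sense. -/
lemma gram_isPosMat {n : ℕ} (e : Fin (n+1) → A) :
    (Matrix.of fun i j => star (e i) * e j : Matrix (Fin (n+1)) (Fin (n+1)) A).IsPosMat := by
  refine ⟨Matrix.of fun i j => if i = 0 then e j else 0, ?_⟩
  ext i j
  simp [Matrix.mul_apply, Matrix.conjTranspose_apply, apply_ite (star : A → A),
    ite_mul, mul_ite]

/-- From complete positivity, the image of a Gram matrix has a Gram factorization. -/
lemma exists_gram (Θ : A →ₗ[ℂ] B) (hΘ : IsUCP Θ) {n : ℕ} (e : Fin (n+1) → A) :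
    ∃ Q : Matrix (Fin (n+1)) (Fin (n+1)) B,
      ∀ i j, Θ (star (e i) * e j) = ∑ k, star (Q k i) * Q k j := by
  obtain ⟨Q, hQ⟩ := hΘ.cp (n+1) _ (gram_isPosMat e)
  refine ⟨Q, fun i j => ?_⟩
  have := congrFun (congrFun hQ i) j
  simpa [Matrix.map_apply, Matrix.mul_apply, Matrix.conjTranspose_apply] using this

/-- A finite sum of elements `star c * c` vanishing forces each term to vanish. -/
lemma eq_zero_of_sum_star_mul_self {n : ℕ} (c : Fin n → A)
    (h : ∑ k, star (c k) * c k = 0) : ∀ k, c k = 0 := by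
  letI : PartialOrder A := CStarAlgebra.spectralOrder A
  letI : StarOrderedRing A := CStarAlgebra.spectralOrderedRing A
  intro k
  have h' := (Finset.sum_eq_zero_iff_of_nonneg
    (fun k _ => star_mul_self_nonneg (c k))).mp h k (Finset.mem_univ k)
  exact (CStarRing.star_mul_self_eq_zero_iff _).mp h'

/-- Quadratic expansion of a Gram-type sum. -/
lemma quad_expand {n : ℕ} (s : B) (u v : Fin n → B) :
    ∑ k, star (v k - u k * s) * (v k - u k * s)
      = (∑ k, star (v k) * v k) - (∑ k, star (v k) * u k) * s
        - star s * (∑ k, star (u k) * v k) + star s * (∑ k, star (u k) * u k) * s := by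
  have h : ∀ k : Fin n, star (v k - u k * s) * (v k - u k * s)
      = star (v k) * v k - (star (v k) * u k) * s
        - star s * (star (u k) * v k) + star s * (star (u k) * u k) * s := by
    intro k
    simp only [star_sub, star_mul]
    noncomm_ring
  simp only [h, Finset.sum_add_distrib, Finset.sum_sub_distrib, Finset.sum_mul,
    Finset.mul_sum, mul_assoc]

end Helpers

section Helpers2

variable {A B : Type*} [CStarAlgebra A] [CStarAlgebra B]

/-- A ucp map is star-preserving. -/
lemma IsUCP.map_star' (Θ : A →ₗ[ℂ] B) (hΘ : IsUCP Θ) (a : A) :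
    Θ (star a) = star (Θ a) := by
  obtain ⟨Q, hQ⟩ := exists_gram Θ hΘ (n := 1) ![1, a]
  have h10 := hQ 1 0
  have h01 := hQ 0 1
  simp only [Matrix.cons_val_zero, Matrix.cons_val_one, Matrix.head_cons, star_one,
    one_mul, mul_one] at h10 h01
  rw [h10, h01]
  rw [star_sum]
  refine Finset.sum_congr rfl fun k _ => ?_
  simp

/-- The Schwarz defect of a ucp map is a sum of squares. -/
lemma schwarz_decomp (Θ : A →ₗ[ℂ] B) (hΘ : IsUCP Θ) (a : A) :
    ∃ w : Fin 2 → B, Θ (star a * a) - star (Θ a) * Θ a = ∑ k, star (w k) * w k := by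
  obtain ⟨Q, hQ⟩ := exists_gram Θ hΘ (n := 1) ![1, a]
  refine ⟨fun k => Q k 1 - Q k 0 * Θ a, ?_⟩
  rw [quad_expand]
  have h00 := hQ 0 0
  have h01 := hQ 0 1
  have h10 := hQ 1 0
  have h11 := hQ 1 1
  simp only [Matrix.cons_val_zero, Matrix.cons_val_one, Matrix.head_cons, star_one,
    one_mul, mul_one] at h00 h01 h10 h11
  rw [← h00, ← h01, ← h10, ← h11, hΘ.unital, hΘ.map_star' , mul_one]
  noncomm_ring

/-- The image of `star b * b` under a ucp map is a square. -/
lemma ucp_star_mul_self (Θ : A →ₗ[ℂ] B) (hΘ : IsUCP Θ) (b : A) :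
    ∃ q : B, Θ (star b * b) = star q * q := by
  obtain ⟨Q, hQ⟩ := exists_gram Θ hΘ (n := 0) ![b]
  refine ⟨Q 0 0, ?_⟩
  have := hQ 0 0
  simpa [Fin.sum_univ_one] using this

/-- Multiplicative-domain lemma: if `Ψ (star b * b) = star (Ψ b) * Ψ b` then
`b` left-multiplies through `Ψ`. -/
lemma mult_dom (Ψ : A →ₗ[ℂ] B) (hΨ : IsUCP Ψ) (b x : A)
    (hb : Ψ (star b * b) = star (Ψ b) * Ψ b) :
    Ψ (star b * x) = star (Ψ b) * Ψ x := by
  obtain ⟨Q, hQ⟩ := exists_gram Ψ hΨ (n := 2) ![b, 1, x]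
  have h00 := hQ 0 0
  have h01 := hQ 0 1
  have h10 := hQ 1 0
  have h11 := hQ 1 1
  have h02 := hQ 0 2
  have h12 := hQ 1 2
  simp only [Matrix.cons_val_zero, Matrix.cons_val_one, Matrix.head_cons, Matrix.cons_val_two,
    Matrix.tail_cons, star_one, one_mul, mul_one] at h00 h01 h10 h11 h02 h12
  have hpp : ∑ k, star (Q k 0 - Q k 1 * Ψ b) * (Q k 0 - Q k 1 * Ψ b) = 0 := by
    rw [quad_expand, ← h00, ← h01, ← h10, ← h11, hb, hΨ.unital, hΨ.map_star', mul_one]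
    noncomm_ring
  have hp0 := eq_zero_of_sum_star_mul_self _ hpp
  have hcol : ∀ k, Q k 0 = Q k 1 * Ψ b := fun k => by
    have := hp0 k; linear_combination (norm := noncomm_ring) this
  rw [h02]
  calc ∑ k, star (Q k 0) * Q k 2 = ∑ k, star (Ψ b) * (star (Q k 1) * Q k 2) := by
        refine Finset.sum_congr rfl fun k _ => ?_
        rw [hcol k, star_mul, mul_assoc]
    _ = star (Ψ b) * ∑ k, star (Q k 1) * Q k 2 := by rw [Finset.mul_sum]
    _ = star (Ψ b) * Ψ x := by rw [← h12]

end Helpers2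


/-- If `Ψ` is a faithful ucp map and `Ψ ∘ Φ` is a unital *-homomorphism, then `Φ` is a unital
*-homomorphism and the range of `Φ` lies in the multiplicative domain of `Ψ`. -/
theorem ucp_comp_faithful_isStarHom_and_range_subset_multDomain
    {A B C : Type*} [CStarAlgebra A] [CStarAlgebra B] [CStarAlgebra C]
    [PartialOrder B] [StarOrderedRing B]
    (Φ : A →ₗ[ℂ] B) (Ψ : B →ₗ[ℂ] C) (hΦ : IsUCP Φ) (hΨ : IsUCP Ψ)
    (hfaith : ∀ b : B, 0 ≤ b → Ψ b = 0 → b = 0)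
    (hcomp_mul : ∀ a b : A, Ψ (Φ (a * b)) = Ψ (Φ a) * Ψ (Φ b))
    (hcomp_star : ∀ a : A, Ψ (Φ (star a)) = star (Ψ (Φ a)))
    (hcomp_unital : Ψ (Φ 1) = 1) :
    (∀ a b : A, Φ (a * b) = Φ a * Φ b) ∧ (∀ a : A, Φ (star a) = star (Φ a)) ∧ Φ 1 = 1 ∧
      ∀ (a : A) (x : B), Ψ (Φ a * x) = Ψ (Φ a) * Ψ x ∧ Ψ (x * Φ a) = Ψ x * Ψ (Φ a) := by
  have hΦstar : ∀ a : A, Φ (star a) = star (Φ a) := IsUCP.map_star' Φ hΦ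
  have hΨstar : ∀ b : B, Ψ (star b) = star (Ψ b) := IsUCP.map_star' Ψ hΨ
  -- Step 1: Φ is multiplicative on `star a * a`.
  have hdiag : ∀ a : A, Φ (star a * a) = star (Φ a) * Φ a := by
    intro a
    obtain ⟨w, hw⟩ := schwarz_decomp Φ hΦ a
    have hdnn : 0 ≤ Φ (star a * a) - star (Φ a) * Φ a := by
      rw [hw]
      exact Finset.sum_nonneg fun k _ => star_mul_self_nonneg _
    have hΨd : Ψ (Φ (star a * a) - star (Φ a) * Φ a) = 0 := by
      letI : PartialOrder C := CStarAlgebra.spectralOrder C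
      letI : StarOrderedRing C := CStarAlgebra.spectralOrderedRing C
      have h1 : 0 ≤ Ψ (Φ (star a * a) - star (Φ a) * Φ a) := by
        rw [hw, map_sum]
        refine Finset.sum_nonneg fun k _ => ?_
        obtain ⟨q, hq⟩ := ucp_star_mul_self Ψ hΨ (w k)
        rw [hq]
        exact star_mul_self_nonneg q
      obtain ⟨w', hw'⟩ := schwarz_decomp Ψ hΨ (Φ a)
      have e1 : Ψ (Φ (star a * a)) = star (Ψ (Φ a)) * Ψ (Φ a) := by
        rw [hcomp_mul, hcomp_star]
      have h2 : Ψ (Φ (star a * a) - star (Φ a) * Φ a) = -(∑ k, star (w' k) * w' k) := by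
        rw [map_sub, e1, ← hw']
        abel
      have h3 : Ψ (Φ (star a * a) - star (Φ a) * Φ a) ≤ 0 := by
        rw [h2]
        exact neg_nonpos_of_nonneg
          (Finset.sum_nonneg fun k _ => star_mul_self_nonneg _)
      exact le_antisymm h3 h1
    exact sub_eq_zero.mp (hfaith _ hdnn hΨd)
  -- Step 2: polarization.
  have hsesq : ∀ x y : A, Φ (star x * y) = star (Φ x) * Φ y := by
    have E : ∀ x y : A, Φ (star x * y) + Φ (star y * x)
        = star (Φ x) * Φ y + star (Φ y) * Φ x := by
      intro x y
      have h := hdiag (x + y)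
      simp only [star_add, add_mul, mul_add, map_add] at h
      rw [hdiag x, hdiag y] at h
      apply add_right_cancel (b := star (Φ x) * Φ x + star (Φ y) * Φ y)
      calc Φ (star x * y) + Φ (star y * x) + (star (Φ x) * Φ x + star (Φ y) * Φ y)
          = star (Φ x) * Φ x + Φ (star y * x) + (Φ (star x * y) + star (Φ y) * Φ y) := by
            abel
        _ = star (Φ x) * Φ x + star (Φ y) * Φ x + (star (Φ x) * Φ y + star (Φ y) * Φ y) := h
        _ = star (Φ x) * Φ y + star (Φ y) * Φ x + (star (Φ x) * Φ x + star (Φ y) * Φ y) := by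
            abel
    intro x y
    have E1 := E x y
    have E2 := E x ((Complex.I : ℂ) • y)
    simp only [star_smul, Complex.star_def, Complex.conj_I, neg_smul,
      smul_mul_assoc, mul_smul_comm, map_smul, map_neg, neg_mul, smul_neg] at E2
    -- E2 : I • Φ (star x * y) - I • Φ (star y * x) = I • (star Φx * Φy) - I • (star Φy * Φx)
    have E2' : Φ (star x * y) - Φ (star y * x)
        = star (Φ x) * Φ y - star (Φ y) * Φ x := by
      have := congrArg (fun z => (-Complex.I : ℂ) • z) E2
      simp only [smul_add, smul_sub, smul_smul, smul_neg, neg_smul, neg_neg,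
        neg_mul, Complex.I_mul_I, one_smul, neg_sub] at this
      simpa [sub_eq_add_neg] using this
    have hsum : Φ (star x * y) + Φ (star x * y)
        = star (Φ x) * Φ y + star (Φ x) * Φ y := by
      have := congrArg₂ (· + ·) E1 E2'
      calc Φ (star x * y) + Φ (star x * y)
          = Φ (star x * y) + Φ (star y * x) + (Φ (star x * y) - Φ (star y * x)) := by abel
        _ = star (Φ x) * Φ y + star (Φ y) * Φ x
            + (star (Φ x) * Φ y - star (Φ y) * Φ x) := this
        _ = star (Φ x) * Φ y + star (Φ x) * Φ y := by abel
    have h2 : (2 : ℂ) • Φ (star x * y) = (2 : ℂ) • (star (Φ x) * Φ y) := by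
      rw [two_smul, two_smul]
      exact hsum
    exact smul_right_injective B two_ne_zero h2
  have hmul : ∀ a b : A, Φ (a * b) = Φ a * Φ b := by
    intro a b
    have := hsesq (star a) b
    rwa [star_star, hΦstar a, star_star] at this
  -- Step 3: multiplicative domain.
  have hkey : ∀ (c : A) (x : B), Ψ (star (Φ c) * x) = star (Ψ (Φ c)) * Ψ x := by
    intro c x
    refine mult_dom Ψ hΨ (Φ c) x ?_
    rw [← hΦstar c, ← hmul (star c) c, hcomp_mul, hcomp_star]
  refine ⟨hmul, hΦstar, hΦ.unital, fun a x => ⟨?_, ?_⟩⟩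
  · have h0 := hkey (star a) x
    rw [← hΦstar, star_star, hcomp_star, star_star] at h0
    exact h0
  · have h0 := hkey a (star x)
    rw [← star_mul] at h0
    simp only [hΨstar] at h0
    have h1 := congrArg star h0
    simpa [star_mul] using h1
end

section
/- Let A, B, C be unital C*-algebras, and let Φ : A → B and Ψ : B → C be unital completely positive maps. Assume that Ψ is faithful and that the composition Ψ ∘ Φ : A → C is a unital *-homomorphism. Then for every a ∈ A one has Φ(a*a) = Φ(a)*Φ(a). -/
set_option maxHeartbeats 1000000 in
/-- Kadison–Schwarz-type inequality for ucp maps, in factored form. -/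
lemma isUCP_schwarz {A B : Type*} [Ring A] [StarRing A] [Algebra ℂ A] [Ring B] [StarRing B]
    [Algebra ℂ B] (Φ : A →ₗ[ℂ] B) (hΦ : IsUCP Φ) (a : A) :
    ∃ z : Fin 2 → B, Φ (star a * a) = star (Φ a) * Φ a + ∑ k, star (z k) * z k := by
  obtain ⟨N, hN⟩ := hΦ.cp 2 !![1, a; star a, star a * a]
    ⟨!![1, a; 0, 0], by
      ext i j
      fin_cases i <;> fin_cases j <;>
        simp [Matrix.mul_apply, Matrix.conjTranspose_apply, Fin.sum_univ_two]⟩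
  have entry : ∀ i j, Φ (!![1, a; star a, star a * a] i j) = ∑ k, star (N k i) * N k j := by
    intro i j
    have h := congrFun (congrFun hN i) j
    simpa [Matrix.map_apply, Matrix.mul_apply, Matrix.conjTranspose_apply] using h
  have h00 : (1 : B) = ∑ k, star (N k 0) * N k 0 := by
    simpa [hΦ.unital] using entry 0 0
  have h01 : Φ a = ∑ k, star (N k 0) * N k 1 := by simpa using entry 0 1
  have h10 : Φ (star a) = ∑ k, star (N k 1) * N k 0 := by simpa using entry 1 0
  have h11 : Φ (star a * a) = ∑ k, star (N k 1) * N k 1 := by simpa using entry 1 1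
  have hstar : Φ (star a) = star (Φ a) := by
    rw [h10, h01, Fin.sum_univ_two, Fin.sum_univ_two, star_add, star_mul, star_mul,
      star_star, star_star]
  set c := Φ a with hc
  refine ⟨fun k => N k 1 - N k 0 * c, ?_⟩
  have key : ∀ k : Fin 2, star (N k 1 - N k 0 * c) * (N k 1 - N k 0 * c)
      = star (N k 1) * N k 1 - (star (N k 1) * N k 0) * c - star c * (star (N k 0) * N k 1)
        + star c * (star (N k 0) * N k 0) * c := by
    intro k
    simp only [star_sub, star_mul]
    noncomm_ring
  rw [Finset.sum_congr rfl fun k _ => key k]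
  simp only [Finset.sum_add_distrib, Finset.sum_sub_distrib, ← Finset.sum_mul, ← Finset.mul_sum]
  rw [← h11, ← h01, ← h10, hstar]
  rw [← h00]
  noncomm_ring

set_option maxHeartbeats 1000000 in
/-- If `Ψ` is a faithful ucp map and `Ψ ∘ Φ` is a unital *-homomorphism, then
`Φ (a⋆ * a) = (Φ a)⋆ * Φ a` for every `a`. -/
theorem ucp_comp_faithful_star_mul_self
    {A B C : Type*} [CStarAlgebra A] [CStarAlgebra B] [CStarAlgebra C]
    [PartialOrder B] [StarOrderedRing B]
    (Φ : A →ₗ[ℂ] B) (Ψ : B →ₗ[ℂ] C) (hΦ : IsUCP Φ) (hΨ : IsUCP Ψ)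
    (hfaith : ∀ b : B, 0 ≤ b → Ψ b = 0 → b = 0)
    (hcomp_mul : ∀ a b : A, Ψ (Φ (a * b)) = Ψ (Φ a) * Ψ (Φ b))
    (hcomp_star : ∀ a : A, Ψ (Φ (star a)) = star (Ψ (Φ a)))
    (hcomp_unital : Ψ (Φ 1) = 1) :
    ∀ a : A, Φ (star a * a) = star (Φ a) * Φ a := by
  intro a
  obtain ⟨z, hz⟩ := isUCP_schwarz Φ hΦ a
  set d := Φ (star a * a) - star (Φ a) * Φ a with hd
  have hd0 : 0 ≤ d := by
    rw [hd, hz, add_sub_cancel_left]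
    exact Finset.sum_nonneg fun k _ => star_mul_self_nonneg (z k)
  suffices hΨd : Ψ d = 0 by
    have := hfaith d hd0 hΨd
    rw [hd, sub_eq_zero] at this
    exact this
  -- `Ψ d` is minus a sum of positives, via the Schwarz lemma for `Ψ`
  obtain ⟨w, hw⟩ := isUCP_schwarz Ψ hΨ (Φ a)
  have hΨd_eq : Ψ d = -∑ k, star (w k) * w k := by
    have h1 : Ψ (Φ (star a * a)) = star (Ψ (Φ a)) * Ψ (Φ a) := by
      rw [hcomp_mul (star a) a, hcomp_star]
    rw [hd, map_sub, h1, hw]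
    abel
  -- `Ψ d` is also of the form `star y * y` since `d ≥ 0` and `Ψ` is positive
  set b := CFC.sqrt d with hb
  have hbd : star b * b = d := by
    have hb0 : 0 ≤ b := CFC.sqrt_nonneg (a := d)
    have hbsa : star b = b := IsSelfAdjoint.star_eq (IsSelfAdjoint.of_nonneg hb0)
    rw [hbsa]
    exact CFC.sqrt_mul_sqrt_self d hd0
  obtain ⟨N, hN⟩ := hΨ.cp 1 (Matrix.of fun _ _ => d)
    ⟨Matrix.of fun _ _ => b, by
      ext i j
      fin_cases i <;> fin_cases j <;>
        simp [Matrix.mul_apply, Matrix.conjTranspose_apply, hbd]⟩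
  have hy : Ψ d = star (N 0 0) * N 0 0 := by
    have h := congrFun (congrFun hN 0) 0
    simpa [Matrix.map_apply, Matrix.mul_apply, Matrix.conjTranspose_apply] using h
  -- conclude in `C` equipped with the spectral order
  letI := CStarAlgebra.spectralOrder C
  haveI := CStarAlgebra.spectralOrderedRing C
  have hnn : (0 : C) ≤ Ψ d := hy ▸ star_mul_self_nonneg (N 0 0)
  have hnp : Ψ d ≤ 0 := by
    rw [hΨd_eq, neg_nonpos]
    exact Finset.sum_nonneg fun k _ => star_mul_self_nonneg (w k)
  exact le_antisymm hnp hnn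
end

section
/- Let A, B, C be unital C*-algebras, and let Φ : A → B and Ψ : B → C be unital completely positive maps. Assume that Ψ is faithful and that the composition Ψ ∘ Φ : A → C is a unital *-homomorphism. Then for every a ∈ A one has Ψ(Φ(a)*Φ(a)) = Ψ(Φ(a))*Ψ(Φ(a)). -/
lemma sq_aux {R : Type*} [Ring R] [StarRing R] (p q r s b : R)
    (h1 : star p * p + star r * r = 1) (hb : b = star p * q + star r * s) :
    (star q * q + star s * s) - star b * b
      = star (p * (-b) + q) * (p * (-b) + q) + star (r * (-b) + s) * (r * (-b) + s) := by
  symm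
  calc star (p * (-b) + q) * (p * (-b) + q) + star (r * (-b) + s) * (r * (-b) + s)
      = star b * (star p * p + star r * r) * b - star b * (star p * q + star r * s)
        - star (star p * q + star r * s) * b + (star q * q + star s * s) := by
          simp only [star_add, star_mul, star_neg, star_star, mul_neg, neg_mul]
          noncomm_ring
    _ = star b * 1 * b - star b * b - star b * b + (star q * q + star s * s) := by
          rw [h1, ← hb]
    _ = (star q * q + star s * s) - star b * b := by noncomm_ring

lemma herm_and_schwarz {R : Type*} [Ring R] [StarRing R] (P : Matrix (Fin 2) (Fin 2) R)
    (hP : P.IsPosMat) (h00 : P 0 0 = 1) :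
    P 1 0 = star (P 0 1) ∧
      ∃ x y : R, P 1 1 - star (P 0 1) * P 0 1 = star x * x + star y * y := by
  obtain ⟨K, hK⟩ := hP
  have hherm : P 1 0 = star (P 0 1) := by
    have hc : P.conjTranspose = P := by
      rw [hK, Matrix.conjTranspose_mul, Matrix.conjTranspose_conjTranspose]
    have := congrFun (congrFun hc 1) 0
    rw [Matrix.conjTranspose_apply] at this
    exact this.symm
  have e00 : star (K 0 0) * K 0 0 + star (K 1 0) * K 1 0 = 1 := by
    rw [← h00, hK]; simp [Matrix.mul_apply, Fin.sum_univ_two, Matrix.conjTranspose_apply]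
  have e01 : P 0 1 = star (K 0 0) * K 0 1 + star (K 1 0) * K 1 1 := by
    rw [hK]; simp [Matrix.mul_apply, Fin.sum_univ_two, Matrix.conjTranspose_apply]
  have e11 : P 1 1 = star (K 0 1) * K 0 1 + star (K 1 1) * K 1 1 := by
    rw [hK]; simp [Matrix.mul_apply, Fin.sum_univ_two, Matrix.conjTranspose_apply]
  exact ⟨hherm, K 0 0 * (-(P 0 1)) + K 0 1, K 1 0 * (-(P 0 1)) + K 1 1, by
    rw [e11]; exact sq_aux (K 0 0) (K 0 1) (K 1 0) (K 1 1) (P 0 1) e00 e01⟩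

lemma posmat2 {R : Type*} [Ring R] [StarRing R] (a : R) :
    (!![(1 : R), a; star a, star a * a]).IsPosMat := by
  refine ⟨!![(1 : R), a; 0, 0], ?_⟩
  ext i j
  fin_cases i <;> fin_cases j <;>
    simp [Matrix.mul_apply, Fin.sum_univ_two, Matrix.conjTranspose_apply]

lemma posmat1 {R : Type*} [Ring R] [StarRing R] (d r : R) (hr : star r * r = d) :
    (!![d]).IsPosMat := by
  refine ⟨!![r], ?_⟩
  ext i j
  fin_cases i <;> fin_cases j <;>
    simp [Matrix.mul_apply, Fin.sum_univ_one, Matrix.conjTranspose_apply, hr]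

/-- If `Ψ` is a faithful ucp map and `Ψ ∘ Φ` is a unital *-homomorphism, then
`Ψ ((Φ a)⋆ * Φ a) = (Ψ (Φ a))⋆ * Ψ (Φ a)` for every `a`. -/
theorem ucp_comp_faithful_psi_of_star_mul_self
    {A B C : Type*} [CStarAlgebra A] [CStarAlgebra B] [CStarAlgebra C]
    [PartialOrder B] [StarOrderedRing B]
    (Φ : A →ₗ[ℂ] B) (Ψ : B →ₗ[ℂ] C) (hΦ : IsUCP Φ) (hΨ : IsUCP Ψ)
    (hfaith : ∀ b : B, 0 ≤ b → Ψ b = 0 → b = 0)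
    (hcomp_mul : ∀ a b : A, Ψ (Φ (a * b)) = Ψ (Φ a) * Ψ (Φ b))
    (hcomp_star : ∀ a : A, Ψ (Φ (star a)) = star (Ψ (Φ a)))
    (hcomp_unital : Ψ (Φ 1) = 1) :
    ∀ a : A, Ψ (star (Φ a) * Φ a) = star (Ψ (Φ a)) * Ψ (Φ a) := by
  intro a
  set b := Φ a with hb
  -- Kadison–Schwarz for Φ via the 2×2 matrix trick
  have hmapΦ := hΦ.cp 2 _ (posmat2 a)
  have hPΦ := herm_and_schwarz _ hmapΦ (by simp [Matrix.map_apply, hΦ.unital])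
  have h01 : (!![(1 : A), a; star a, star a * a].map Φ) 0 1 = b := by
    simp [Matrix.map_apply, hb]
  have h11 : (!![(1 : A), a; star a, star a * a].map Φ) 1 1 = Φ (star a * a) := by
    simp [Matrix.map_apply]
  rw [h01, h11] at hPΦ
  obtain ⟨-, x, y, hxy⟩ := hPΦ
  set d := Φ (star a * a) - star b * b with hd
  have hd0 : 0 ≤ d := by
    rw [hxy]
    exact add_nonneg (star_mul_self_nonneg x) (star_mul_self_nonneg y)
  -- Ψ d is of the form star s * s
  have hr : star (CFC.sqrt d) * CFC.sqrt d = d := by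
    have h1 : IsSelfAdjoint (CFC.sqrt d) := IsSelfAdjoint.of_nonneg (CFC.sqrt_nonneg d)
    rw [h1.star_eq]
    exact CFC.sqrt_mul_sqrt_self d hd0
  obtain ⟨K1, hK1⟩ := hΨ.cp 1 _ (posmat1 d _ hr)
  have hs : Ψ d = star (K1 0 0) * K1 0 0 := by
    have := congrFun (congrFun hK1 0) 0
    simpa [Matrix.map_apply, Matrix.mul_apply, Fin.sum_univ_one,
      Matrix.conjTranspose_apply] using this
  -- Kadison–Schwarz for Ψ applied to b
  have hmapΨ := hΨ.cp 2 _ (posmat2 b)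
  have hPΨ := herm_and_schwarz _ hmapΨ (by simp [Matrix.map_apply, hΨ.unital])
  have g01 : (!![(1 : B), b; star b, star b * b].map Ψ) 0 1 = Ψ b := by
    simp [Matrix.map_apply]
  have g11 : (!![(1 : B), b; star b, star b * b].map Ψ) 1 1 = Ψ (star b * b) := by
    simp [Matrix.map_apply]
  rw [g01, g11] at hPΨ
  obtain ⟨-, u, v, huv⟩ := hPΨ
  -- Ψ (Φ (star a * a)) = star (Ψ b) * Ψ b
  have hmul : Ψ (Φ (star a * a)) = star (Ψ b) * Ψ b := by
    rw [hcomp_mul, hcomp_star, hb]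
  -- the sum of three "positives" is zero
  have hsum : star (K1 0 0) * K1 0 0 + (star u * u + star v * v) = 0 := by
    rw [← hs, ← huv, hd, map_sub, hmul]
    abel
  -- conclude Ψ d = 0 using the spectral order on C
  have hΨd : Ψ d = 0 := by
    letI : PartialOrder C := CStarAlgebra.spectralOrder C
    letI : StarOrderedRing C := CStarAlgebra.spectralOrderedRing C
    rw [hs]
    refine le_antisymm ?_ (star_mul_self_nonneg _)
    have : star (K1 0 0) * K1 0 0 = -(star u * u + star v * v) :=
      eq_neg_of_add_eq_zero_left hsum
    rw [this]
    exact neg_nonpos.mpr (add_nonneg (star_mul_self_nonneg u) (star_mul_self_nonneg v))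
  have hd_eq : Φ (star a * a) = star b * b := by
    have := hfaith d hd0 hΨd
    rw [hd, sub_eq_zero] at this
    exact this
  rw [← hd_eq, hmul, hb]
end

section
/- (Multiplicative domain) Let B and C be unital C*-algebras, Ψ : B → C a unital completely positive map, and b ∈ B an element satisfying Ψ(b*b) = Ψ(b)*Ψ(b) and Ψ(bb*) = Ψ(b)Ψ(b)*. Then for every x ∈ B one has Ψ(bx) = Ψ(b)Ψ(x) and Ψ(xb) = Ψ(x)Ψ(b). -/
/-! Write `u = Ψ c` and `v = Ψ x`. Complete positivity applied to `Nᴴ * N`, where `N` has first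
row `(1, c, x)`, gives a positive `3 × 3` matrix with rows `(1, u, v)` and `(u⋆, Ψ(c⋆c), Ψ(c⋆x))`.
When `Ψ(c⋆c) = u⋆u`, its Schur complement with respect to the corner `1` has a zero diagonal entry,
so the whole row vanishes, and the entry next to it is `Ψ(c⋆x) - u⋆v`. This gives
`Ψ(c⋆x) = Ψ(c)⋆Ψ(x)`; take `c = b⋆` for the first identity, and `c = b` and adjoints for the second.
-/

open Matrix

namespace Matrix.IsPosMat

variable {A : Type*} [Ring A] [StarRing A] {n : ℕ} {M : Matrix (Fin n) (Fin n) A}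

theorem isHermitian (hM : M.IsPosMat) : M.IsHermitian := by
  obtain ⟨N, rfl⟩ := hM
  exact isHermitian_conjTranspose_mul_self N

theorem conjTranspose_mul_mul (hM : M.IsPosMat) (R : Matrix (Fin n) (Fin n) A) :
    (Rᴴ * M * R).IsPosMat := by
  obtain ⟨N, rfl⟩ := hM
  exact ⟨N * R, by simp only [conjTranspose_mul, Matrix.mul_assoc]⟩

theorem apply_eq_zero_of_apply_self_eq_zero {C : Type*} [NormedRing C] [StarRing C]
    [CStarRing C] [PartialOrder C] [StarOrderedRing C] {M : Matrix (Fin n) (Fin n) C}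
    (hM : M.IsPosMat) {i : Fin n} (hi : M i i = 0) (j : Fin n) : M i j = 0 := by
  obtain ⟨N, rfl⟩ := hM
  have hcol : ∀ k, N k i = 0 := fun k ↦ by
    simp only [mul_apply, conjTranspose_apply] at hi
    have := (Finset.sum_eq_zero_iff_of_nonneg fun l _ ↦ star_mul_self_nonneg (N l i)).mp hi k
      (Finset.mem_univ k)
    exact (CStarRing.star_mul_self_eq_zero_iff _).mp this
  simp [mul_apply, hcol]

end Matrix.IsPosMat

namespace IsUCP

variable {A B : Type*} [Ring A] [StarRing A] [Algebra ℂ A] [Ring B] [StarRing B] [Algebra ℂ B]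
  {Φ : A →ₗ[ℂ] B}

theorem map_star (hΦ : IsUCP Φ) (a : A) : Φ (star a) = star (Φ a) := by
  have h := congrFun₂ (hΦ.cp 2 _ ⟨!![1, a; 0, 0], rfl⟩).isHermitian 0 1
  simpa [mul_apply, Fin.sum_univ_two] using congrArg star h

theorem map_gram (hΦ : IsUCP Φ) (c x : A) :
    (!![1, c, x; 0, 0, 0; 0, 0, 0]ᴴ * !![1, c, x; 0, 0, 0; 0, 0, 0]).map Φ =
      !![1, Φ c, Φ x; star (Φ c), Φ (star c * c), Φ (star c * x);
        star (Φ x), Φ (star x * c), Φ (star x * x)] := by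
  ext i j
  fin_cases i <;> fin_cases j <;> simp [mul_apply, Fin.sum_univ_three, hΦ.unital, hΦ.map_star]

end IsUCP

theorem IsUCP.map_star_mul_of_map_star_mul_self {A C : Type*} [Ring A] [StarRing A]
    [Algebra ℂ A] [CStarAlgebra C] {Ψ : A →ₗ[ℂ] C} (hΨ : IsUCP Ψ) {c : A}
    (hc : Ψ (star c * c) = star (Ψ c) * Ψ c) (x : A) :
    Ψ (star c * x) = star (Ψ c) * Ψ x := by
  let _ := CStarAlgebra.spectralOrder C
  let _ := CStarAlgebra.spectralOrderedRing C
  set R : Matrix (Fin 3) (Fin 3) C := !![1, -Ψ c, -Ψ x; 0, 1, 0; 0, 0, 1]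
  have hQ := (hΨ.cp 3 _ ⟨!![1, c, x; 0, 0, 0; 0, 0, 0], rfl⟩).conjTranspose_mul_mul R
  rw [hΨ.map_gram, hc] at hQ
  have h12 := hQ.apply_eq_zero_of_apply_self_eq_zero (i := 1) (by
    simp [R, mul_apply, Fin.sum_univ_three]) 2
  exact (neg_add_eq_zero.mp (by simpa [R, mul_apply, Fin.sum_univ_three] using h12)).symm

/-- Multiplicative domain: if a ucp map `Ψ` satisfies `Ψ(b⋆b) = Ψ(b)⋆Ψ(b)` and
`Ψ(bb⋆) = Ψ(b)Ψ(b)⋆`, then `b` lies in the multiplicative domain of `Ψ`. -/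
theorem ucp_multiplicative_domain
    {B C : Type*} [CStarAlgebra B] [CStarAlgebra C]
    (Ψ : B →ₗ[ℂ] C) (hΨ : IsUCP Ψ) (b : B)
    (h₁ : Ψ (star b * b) = star (Ψ b) * Ψ b)
    (h₂ : Ψ (b * star b) = Ψ b * star (Ψ b)) :
    ∀ x : B, Ψ (b * x) = Ψ b * Ψ x ∧ Ψ (x * b) = Ψ x * Ψ b := by
  intro x
  have hb : Ψ (star (star b) * star b) = star (Ψ (star b)) * Ψ (star b) := by
    rw [star_star, hΨ.map_star, star_star, h₂]
  constructor
  · simpa only [star_star, hΨ.map_star] using hΨ.map_star_mul_of_map_star_mul_self hb x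
  · calc Ψ (x * b) = star (Ψ (star b * star x)) := by
          rw [← hΨ.map_star, star_mul, star_star, star_star]
      _ = Ψ x * Ψ b := by
          rw [hΨ.map_star_mul_of_map_star_mul_self h₁, star_mul, hΨ.map_star, star_star,
            star_star]
end
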